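/- Let X ∈ U(n, q^s) be a balanced lattice design with n ≥ 2, s ≥ 2, such that q(n−1) divides s(n−q). Then Ave(χ²)(X) ≥ n²(q−1)((q−1)s − n + 1)/(q²(s−1)(n−1)). -/

import Mathlib

open Finset

/-- A design `X ∈ U(n, q^s)` is balanced: `q ∣ n` and every level occurs exactly
`n / q` times in each column. -/
def IsBalanced {n s q : ℕ} (X : Fin n → Fin s → Fin q) : Prop :=
  q ∣ n ∧ ∀ (j : Fin s) (ℓ : Fin q),
    (univ.filter fun i => X i j = ℓ).card = n / q

/-- The index set of pairs 1 ≤ i < k ≤ n. -/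
def pairs (n : ℕ) : Finset (Fin n × Fin n) := univ.filter fun p => p.1 < p.2

/-- The nonorthogonality criterion
Ave(χ²)(X) = (2/(s(s−1))) ∑_{j<l} ∑_{τ₁,τ₂} (N^{(j,l)}_{τ₁,τ₂} − n/q²)². -/
noncomputable def aveChiSq {n s q : ℕ} (X : Fin n → Fin s → Fin q) : ℝ :=
  2 / ((s : ℝ) * ((s : ℝ) - 1)) *
    ∑ p ∈ pairs s, ∑ τ : Fin q × Fin q,
      (((univ.filter fun i => X i p.1 = τ.1 ∧ X i p.2 = τ.2).card : ℝ)
        - (n : ℝ) / (q : ℝ) ^ 2) ^ 2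

/-!
Write `λ_{ik}` for the number of factors on which runs `i` and `k` agree. Counting
quadruples `(i, k, j, l)` of two runs agreeing on two factors gives
`∑_{j,l} ∑_τ (N^{(j,l)}_τ)² = ∑_{i,k} λ_{ik}²`, and since `∑_τ N^{(j,l)}_τ = n`,
`s(s-1) · Ave(χ²) = ∑ λ_{ik}² - ∑ λ_{ik} - s(s-1) n²/q²`. Balance gives
`∑_{i,k} λ_{ik} = s n²/q`, and `λ_{ii} = s`; Cauchy–Schwarz over the `n(n-1)` off-diagonal
pairs bounds `∑ λ_{ik}²` from below, which is the claimed bound.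
-/

section DoubleCounting

variable {α β : Type*} [Fintype α] [Fintype β]

theorem sum_card_fiber_sq [DecidableEq β] (f : α → β) :
    ∑ b, #{a | f a = b} ^ 2 = #{p : α × α | f p.1 = f p.2} := by
  rw [card_eq_sum_card_fiberwise (f := fun p : α × α => f p.1) (t := univ)
    fun _ _ => mem_univ _]
  refine sum_congr rfl fun b _ => ?_
  rw [sq, ← card_product, filter_filter]
  congr 1
  ext p
  simp only [mem_filter, mem_univ, true_and, mem_product]
  exact ⟨fun ⟨h₁, h₂⟩ => ⟨h₁.trans h₂.symm, h₁⟩,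
    fun ⟨h, h₁⟩ => ⟨h₁, h.symm.trans h₁⟩⟩

theorem sum_card_filter_sq (P : α → β → Prop) [∀ a b, Decidable (P a b)] :
    ∑ b, #{a | P a b} ^ 2 = ∑ p : α × α, #{b | P p.1 b ∧ P p.2 b} := by
  have hsq (b : β) : #{a | P a b} ^ 2 = #{p : α × α | P p.1 b ∧ P p.2 b} := by
    rw [sq, ← card_product, ← filter_product, univ_product_univ]
  simp_rw [hsq]
  simp only [card_filter]
  exact sum_comm

end DoubleCounting

theorem sum_eq_sum_diag_add_sum_offDiag {ι M : Type*} [Fintype ι] [DecidableEq ι]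
    [AddCommMonoid M] (f : ι × ι → M) :
    ∑ p, f p = ∑ i, f (i, i) + ∑ p ∈ univ.offDiag, f p := by
  rw [← univ_product_univ, ← diag_union_offDiag, sum_union (disjoint_diag_offDiag _),
    sum_diag]

theorem sum_eq_two_nsmul_sum_pairs_add_sum_diag {s : ℕ} {M : Type*} [AddCommMonoid M]
    (f : Fin s × Fin s → M) (hf : ∀ j l, f (j, l) = f (l, j)) :
    ∑ p, f p = 2 • ∑ p ∈ pairs s, f p + ∑ j, f (j, j) := by
  have hlt : univ.offDiag.filter (fun p : Fin s × Fin s => p.1 < p.2) = pairs s := by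
    ext p
    simp only [pairs, mem_filter, mem_offDiag, mem_univ, true_and]
    exact ⟨And.right, fun h => ⟨h.ne, h⟩⟩
  have hgt : ∑ p ∈ univ.offDiag.filter (fun p : Fin s × Fin s => ¬ p.1 < p.2), f p
      = ∑ p ∈ pairs s, f p := by
    refine sum_nbij' Prod.swap Prod.swap ?_ ?_ (fun p _ => p.swap_swap) (fun p _ => p.swap_swap)
      fun p _ => hf p.1 p.2
    · intro p
      simp only [pairs, mem_filter, mem_offDiag, mem_univ, true_and, Prod.fst_swap,
        Prod.snd_swap, not_lt]
      exact fun ⟨hne, hle⟩ => lt_of_le_of_ne hle (Ne.symm hne)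
    · intro p
      simp only [pairs, mem_filter, mem_offDiag, mem_univ, true_and, Prod.fst_swap,
        Prod.snd_swap, not_lt]
      exact fun h => ⟨h.ne', h.le⟩
  rw [sum_eq_sum_diag_add_sum_offDiag,
    ← sum_filter_add_sum_filter_not univ.offDiag fun p : Fin s × Fin s => p.1 < p.2,
    hlt, hgt, two_nsmul, add_comm]

theorem le_sum_sq_of_forall_diag_eq {ι : Type*} [Fintype ι] (a : ι × ι → ℝ) {c : ℝ}
    (hdiag : ∀ i, a (i, i) = c) :
    Fintype.card ι * c ^ 2 +
      (∑ p, a p - Fintype.card ι * c) ^ 2 / (Fintype.card ι * (Fintype.card ι - 1))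
      ≤ ∑ p, a p ^ 2 := by
  classical
  have hcard : ((univ.offDiag : Finset (ι × ι)).card : ℝ)
      = Fintype.card ι * (Fintype.card ι - 1) := by
    rw [offDiag_card, card_univ, Nat.cast_sub (Nat.le_mul_self _)]
    push_cast
    ring
  simp only [sum_eq_sum_diag_add_sum_offDiag a, sum_eq_sum_diag_add_sum_offDiag (a · ^ 2),
    hdiag, sum_const, card_univ, nsmul_eq_mul, add_sub_cancel_left, ← hcard]
  gcongr
  exact div_le_of_le_mul₀ (Nat.cast_nonneg _) (sum_nonneg fun _ _ => sq_nonneg _)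
    (sq_sum_le_card_mul_sum_sq.trans_eq (mul_comm _ _))

section Design

variable {n s q : ℕ} (X : Fin n → Fin s → Fin q)

/-- The paper's `N^{(j,l)}_{τ₁,τ₂}`. -/
def cellCount (j l : Fin s) (τ : Fin q × Fin q) : ℕ := #{i | X i j = τ.1 ∧ X i l = τ.2}

def agreements (j l : Fin s) : ℕ :=
  #{p : Fin n × Fin n | X p.1 j = X p.2 j ∧ X p.1 l = X p.2 l}

def coincidences (p : Fin n × Fin n) : ℕ := #{j | X p.1 j = X p.2 j}

noncomputable def pairChiSq (j l : Fin s) : ℝ :=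
  ∑ τ, ((cellCount X j l τ : ℝ) - n / q ^ 2) ^ 2

theorem aveChiSq_eq_mul_sum_pairChiSq :
    aveChiSq X = 2 / (s * (s - 1)) * ∑ p ∈ pairs s, pairChiSq X p.1 p.2 := rfl

theorem sum_cellCount (j l : Fin s) : ∑ τ, cellCount X j l τ = n := by
  simpa [cellCount, Prod.ext_iff] using
    (card_eq_sum_card_fiberwise (f := fun i => (X i j, X i l)) (s := univ) (t := univ)
      fun _ _ => mem_univ _).symm

theorem sum_cellCount_sq (j l : Fin s) : ∑ τ, cellCount X j l τ ^ 2 = agreements X j l := by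
  simpa [cellCount, agreements, Prod.ext_iff] using sum_card_fiber_sq fun i => (X i j, X i l)

theorem pairChiSq_eq (hq : q ≠ 0) (j l : Fin s) :
    pairChiSq X j l = agreements X j l - (n : ℝ) ^ 2 / q ^ 2 := by
  have hN : ∑ τ, (cellCount X j l τ : ℝ) = n := by exact_mod_cast sum_cellCount X j l
  have hN2 : ∑ τ, (cellCount X j l τ : ℝ) ^ 2 = agreements X j l := by
    exact_mod_cast sum_cellCount_sq X j l
  simp only [pairChiSq, sub_sq, sum_add_distrib, sum_sub_distrib, ← sum_mul, ← mul_sum, hN, hN2,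
    sum_const, card_univ, Fintype.card_prod, Fintype.card_fin, nsmul_eq_mul]
  push_cast
  field_simp
  ring

theorem agreements_comm (j l : Fin s) : agreements X j l = agreements X l j := by
  simp only [agreements, and_comm]

theorem sum_agreements :
    ∑ p : Fin s × Fin s, agreements X p.1 p.2 = ∑ p, coincidences X p ^ 2 :=
  (sum_card_filter_sq fun j (p : Fin n × Fin n) => X p.1 j = X p.2 j).symm

theorem sum_coincidences :
    ∑ p, coincidences X p = ∑ j, #{p : Fin n × Fin n | X p.1 j = X p.2 j} := by
  simp only [coincidences, card_filter]
  exact sum_comm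

theorem sum_agreements_diag : ∑ j, agreements X j j = ∑ p, coincidences X p := by
  simp only [agreements, and_self, sum_coincidences]

theorem coincidences_diag (i : Fin n) : coincidences X (i, i) = s := by
  simp [coincidences]

theorem aveChiSq_eq (hq : q ≠ 0) :
    aveChiSq X = (∑ p, (coincidences X p : ℝ) ^ 2 - ∑ p, (coincidences X p : ℝ)
      - s * (s - 1) * ((n : ℝ) ^ 2 / q ^ 2)) / (s * (s - 1)) := by
  have h := sum_eq_two_nsmul_sum_pairs_add_sum_diag (fun p => pairChiSq X p.1 p.2)
    fun j l => by simp only [pairChiSq_eq X hq, agreements_comm]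
  have hall : ∑ p : Fin s × Fin s, pairChiSq X p.1 p.2
      = ∑ p, (coincidences X p : ℝ) ^ 2 - s ^ 2 * ((n : ℝ) ^ 2 / q ^ 2) := by
    simp only [pairChiSq_eq X hq, sum_sub_distrib, sum_const, card_univ, Fintype.card_prod,
      Fintype.card_fin, nsmul_eq_mul]
    rw [← Nat.cast_sum, sum_agreements]
    push_cast
    ring
  have hdiag :
      ∑ j, pairChiSq X j j = ∑ p, (coincidences X p : ℝ) - s * ((n : ℝ) ^ 2 / q ^ 2) := by
    simp only [pairChiSq_eq X hq, sum_sub_distrib, sum_const, card_univ, Fintype.card_fin,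
      nsmul_eq_mul]
    rw [← Nat.cast_sum, sum_agreements_diag]
    push_cast
    ring
  rw [hall, hdiag, two_nsmul] at h
  rw [aveChiSq_eq_mul_sum_pairChiSq, div_mul_eq_mul_div]
  congr 1
  linarith

theorem sum_coincidences_of_isBalanced (hX : IsBalanced X) :
    q * ∑ p, coincidences X p = s * n ^ 2 := by
  have hcol (j : Fin s) : #{p : Fin n × Fin n | X p.1 j = X p.2 j} = q * (n / q) ^ 2 := by
    simp [← sum_card_fiber_sq fun i => X i j, hX.2 j]
  simp only [sum_coincidences, hcol, sum_const, card_univ, Fintype.card_fin, smul_eq_mul]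
  calc q * (s * (q * (n / q) ^ 2)) = s * (q * (n / q)) ^ 2 := by ring
    _ = s * n ^ 2 := by rw [Nat.mul_div_cancel' hX.1]

end Design

theorem aveChiSq_integer_lower_bound_general (n s q : ℕ) (hn : 2 ≤ n) (hs : 2 ≤ s)
    (X : Fin n → Fin s → Fin q) (hX : IsBalanced X) :
    aveChiSq X ≥ (n : ℝ) ^ 2 * ((q : ℝ) - 1) * (((q : ℝ) - 1) * s - n + 1) /
      ((q : ℝ) ^ 2 * ((s : ℝ) - 1) * ((n : ℝ) - 1)) := by
  have hq : q ≠ 0 := (Nat.pos_of_dvd_of_pos hX.1 (by omega)).ne'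
  have hΛ : ∑ p, (coincidences X p : ℝ) = s * n ^ 2 / q := by
    rw [eq_div_iff (by exact_mod_cast hq), mul_comm]
    exact_mod_cast sum_coincidences_of_isBalanced X hX
  have hCS := le_sum_sq_of_forall_diag_eq (fun p => (coincidences X p : ℝ))
    fun i => congrArg Nat.cast (coincidences_diag X i)
  rw [Fintype.card_fin, hΛ] at hCS
  have hs' : (2 : ℝ) ≤ s := by exact_mod_cast hs
  have hn' : (2 : ℝ) ≤ n := by exact_mod_cast hn
  have hs₁ : (s : ℝ) - 1 ≠ 0 := by linarith
  have hn₁ : (n : ℝ) - 1 ≠ 0 := by linarith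
  have hD : 0 ≤ (s : ℝ) * (s - 1) := by nlinarith
  rw [aveChiSq_eq X hq, hΛ, ge_iff_le]
  calc _ = (n * s ^ 2 + (s * n ^ 2 / q - n * s) ^ 2 / (n * (n - 1)) - s * n ^ 2 / q
          - s * (s - 1) * ((n : ℝ) ^ 2 / q ^ 2)) / (s * (s - 1)) := by
        field_simp
        ring
    _ ≤ _ := by gcongr

/-- For a balanced design whose PC-mean is an integer (q(n−1) ∣ s(n−q)),
Ave(χ²)(X) ≥ n²(q−1)((q−1)s − n + 1) / (q²(s−1)(n−1)). -/
theorem aveChiSq_integer_lower_bound (n s q : ℕ) (hq : 2 ≤ q) (hn : 2 ≤ n) (hs : 2 ≤ s)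
    (X : Fin n → Fin s → Fin q) (hX : IsBalanced X)
    (hdvd : q * (n - 1) ∣ s * (n - q)) :
    aveChiSq X ≥ (n : ℝ) ^ 2 * ((q : ℝ) - 1) * (((q : ℝ) - 1) * s - n + 1) /
      ((q : ℝ) ^ 2 * ((s : ℝ) - 1) * ((n : ℝ) - 1)) :=
  aveChiSq_integer_lower_bound_general n s q hn hs X hX
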